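/- arXiv:1112.4314 — 2 statements merged into one kernel-verified Lean document; each statement's English description precedes it below -/
import Mathlib

section
/- Let s > 1/2 and let (a_{α,β})_{α ∈ ℕ^{d₂}, β ∈ ℕ^{d₁}} satisfy: for every r > 0, sup_{α,β} |a_{α,β}| e^{r(|α|^{1/(2s)} + |β|^{1/(2s)})} < ∞. Then there exist families (b_{α,β})_{α ∈ ℕ^{d₂}, β ∈ ℕ^{d₁}} and (c_{α,β})_{α,β ∈ ℕ^{d₁}} with c diagonal (c_{α,β} = 0 when α ≠ β), such that for every r > 0 both sup_{α,β} |b_{α,β}| e^{r(|α|^{1/(2s)} + |β|^{1/(2s)})} < ∞ and sup_{α,β} |c_{α,β}| e^{r(|α|^{1/(2s)} + |β|^{1/(2s)})} < ∞, and ∑_γ b_{α,γ} c_{γ,β} = a_{α,β} for all α, β. -/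
open Real

/-- The length `|α|` of a multi-index `α ∈ ℕ^d`, as a real number. -/
def mlen {d : ℕ} (α : Fin d → ℕ) : ℝ := ∑ i, (α i : ℝ)

lemma mlen_nonneg {d : ℕ} (α : Fin d → ℕ) : 0 ≤ mlen α :=
  Finset.sum_nonneg (fun i _ => by positivity)

theorem stmt2 (d₁ d₂ : ℕ) (s : ℝ) (hs : 1/2 < s)
    (a : (Fin d₂ → ℕ) → (Fin d₁ → ℕ) → ℂ)
    (ha : ∀ r : ℝ, 0 < r → ∃ M : ℝ, ∀ (α : Fin d₂ → ℕ) (β : Fin d₁ → ℕ),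
      ‖a α β‖ * Real.exp (r * (mlen α ^ (1/(2*s)) + mlen β ^ (1/(2*s)))) ≤ M) :
    ∃ (b : (Fin d₂ → ℕ) → (Fin d₁ → ℕ) → ℂ) (c : (Fin d₁ → ℕ) → (Fin d₁ → ℕ) → ℂ),
      (∀ α β : Fin d₁ → ℕ, α ≠ β → c α β = 0) ∧
      (∀ r : ℝ, 0 < r → ∃ M : ℝ, ∀ (α : Fin d₂ → ℕ) (β : Fin d₁ → ℕ),
        ‖b α β‖ * Real.exp (r * (mlen α ^ (1/(2*s)) + mlen β ^ (1/(2*s)))) ≤ M) ∧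
      (∀ r : ℝ, 0 < r → ∃ M : ℝ, ∀ (α β : Fin d₁ → ℕ),
        ‖c α β‖ * Real.exp (r * (mlen α ^ (1/(2*s)) + mlen β ^ (1/(2*s)))) ≤ M) ∧
      (∀ (α : Fin d₂ → ℕ) (β : Fin d₁ → ℕ),
        (∑' γ : Fin d₁ → ℕ, b α γ * c γ β) = a α β) := by
  have hp : ∀ {d : ℕ} (α : Fin d → ℕ), 0 ≤ mlen α ^ (1/(2*s)) :=
    fun α => Real.rpow_nonneg (mlen_nonneg _) _
  -- boundedness of the family
  obtain ⟨M₁, hM₁⟩ := ha 1 one_pos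
  have hbdd : ∀ β, BddAbove (Set.range fun α => ‖a α β‖) := by
    intro β
    refine ⟨M₁, ?_⟩
    rintro x ⟨α, rfl⟩
    have h1 : (1:ℝ) ≤ Real.exp (1 * (mlen α ^ (1/(2*s)) + mlen β ^ (1/(2*s)))) :=
      Real.one_le_exp (by rw [one_mul]; exact add_nonneg (hp α) (hp β))
    nlinarith [hM₁ α β, norm_nonneg (a α β)]
  set T : (Fin d₁ → ℕ) → ℝ := fun β => ⨆ α, ‖a α β‖ with hTdef
  have hTa : ∀ α β, ‖a α β‖ ≤ T β := fun α β => le_ciSup (hbdd β) α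
  have hT0 : ∀ β, 0 ≤ T β :=
    fun β => le_trans (norm_nonneg (a (fun _ => 0) β)) (hTa _ β)
  -- decay of T at every rate
  have hTdec : ∀ r : ℝ, 0 < r → ∃ M : ℝ, 0 ≤ M ∧
      ∀ β, T β ≤ M * Real.exp (-(r * mlen β ^ (1/(2*s)))) := by
    intro r hr
    obtain ⟨M, hM⟩ := ha r hr
    have hM0 : 0 ≤ M := by
      have := hM (fun _ => 0) (fun _ => 0)
      nlinarith [norm_nonneg (a (fun _ => 0) (fun _ => 0)),
        Real.exp_pos (r * (mlen (fun _ => 0 : Fin d₂ → ℕ) ^ (1/(2*s)) +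
          mlen (fun _ => 0 : Fin d₁ → ℕ) ^ (1/(2*s))))]
    refine ⟨M, hM0, fun β => ciSup_le fun α => ?_⟩
    have hpos : (0:ℝ) < Real.exp (r * mlen β ^ (1/(2*s))) := Real.exp_pos _
    rw [Real.exp_neg, ← div_eq_mul_inv, le_div_iff₀ hpos]
    have hexp : Real.exp (r * mlen β ^ (1/(2*s))) ≤
        Real.exp (r * (mlen α ^ (1/(2*s)) + mlen β ^ (1/(2*s)))) := by
      apply Real.exp_le_exp.2
      nlinarith [hp α, hr.le]
    calc ‖a α β‖ * Real.exp (r * mlen β ^ (1/(2*s)))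
        ≤ ‖a α β‖ * Real.exp (r * (mlen α ^ (1/(2*s)) + mlen β ^ (1/(2*s)))) :=
          mul_le_mul_of_nonneg_left hexp (norm_nonneg _)
      _ ≤ M := hM α β
  refine ⟨fun α β => a α β / (Real.sqrt (T β) : ℂ),
    fun γ β => if γ = β then ((Real.sqrt (T β) : ℝ) : ℂ) else 0, ?_, ?_, ?_, ?_⟩
  · intro α β h; simp [h]
  · -- bound for b
    intro r hr
    obtain ⟨M, hM⟩ := ha (2*r) (by linarith)
    refine ⟨Real.sqrt M, fun α β => ?_⟩
    have hb : ‖a α β / (Real.sqrt (T β) : ℂ)‖ ≤ Real.sqrt ‖a α β‖ := by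
      rw [norm_div, Complex.norm_real, Real.norm_eq_abs,
        abs_of_nonneg (Real.sqrt_nonneg _)]
      rcases eq_or_lt_of_le (hT0 β) with h0 | h0
      · have hz : ‖a α β‖ = 0 :=
          le_antisymm ((hTa α β).trans h0.symm.le) (norm_nonneg _)
        simp [hz]
      · rw [div_le_iff₀ (Real.sqrt_pos.2 h0)]
        calc ‖a α β‖ = Real.sqrt (‖a α β‖ * ‖a α β‖) :=
              (Real.sqrt_mul_self (norm_nonneg _)).symm
          _ ≤ Real.sqrt (‖a α β‖ * T β) :=
              Real.sqrt_le_sqrt (mul_le_mul_of_nonneg_left (hTa α β) (norm_nonneg _))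
          _ = Real.sqrt ‖a α β‖ * Real.sqrt (T β) := Real.sqrt_mul (norm_nonneg _) _
    have hsq : Real.exp (r * (mlen α ^ (1/(2*s)) + mlen β ^ (1/(2*s)))) ^ 2
        = Real.exp ((2*r) * (mlen α ^ (1/(2*s)) + mlen β ^ (1/(2*s)))) := by
      rw [← Real.exp_nat_mul]; ring_nf
    calc ‖a α β / (Real.sqrt (T β) : ℂ)‖ *
          Real.exp (r * (mlen α ^ (1/(2*s)) + mlen β ^ (1/(2*s))))
        ≤ Real.sqrt ‖a α β‖ * Real.exp (r * (mlen α ^ (1/(2*s)) + mlen β ^ (1/(2*s)))) :=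
          mul_le_mul_of_nonneg_right hb (Real.exp_pos _).le
      _ = Real.sqrt (‖a α β‖ *
            Real.exp ((2*r) * (mlen α ^ (1/(2*s)) + mlen β ^ (1/(2*s))))) := by
          rw [Real.sqrt_mul (norm_nonneg _), ← hsq, Real.sqrt_sq (Real.exp_pos _).le]
      _ ≤ Real.sqrt M := Real.sqrt_le_sqrt (hM α β)
  · -- bound for c
    intro r hr
    obtain ⟨M, hM0, hM⟩ := hTdec (4*r) (by linarith)
    refine ⟨Real.sqrt M, fun α β => ?_⟩
    by_cases h : α = β
    · subst h
      simp only [eq_self_iff_true, if_true, Complex.norm_real, Real.norm_eq_abs,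
        abs_of_nonneg (Real.sqrt_nonneg _)]
      have hsq : Real.exp (r * (mlen α ^ (1/(2*s)) + mlen α ^ (1/(2*s)))) ^ 2
          = Real.exp ((4*r) * mlen α ^ (1/(2*s))) := by
        rw [← Real.exp_nat_mul]; ring_nf
      have key : T α * Real.exp ((4*r) * mlen α ^ (1/(2*s))) ≤ M := by
        calc T α * Real.exp ((4*r) * mlen α ^ (1/(2*s)))
            ≤ (M * Real.exp (-((4*r) * mlen α ^ (1/(2*s))))) *
                Real.exp ((4*r) * mlen α ^ (1/(2*s))) :=
              mul_le_mul_of_nonneg_right (hM α) (Real.exp_pos _).le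
          _ = M := by rw [mul_assoc, ← Real.exp_add]; simp
      calc Real.sqrt (T α) * Real.exp (r * (mlen α ^ (1/(2*s)) + mlen α ^ (1/(2*s))))
          = Real.sqrt (T α * Real.exp ((4*r) * mlen α ^ (1/(2*s)))) := by
            rw [Real.sqrt_mul (hT0 _), ← hsq, Real.sqrt_sq (Real.exp_pos _).le]
        _ ≤ Real.sqrt M := Real.sqrt_le_sqrt key
    · simp only [if_neg h, norm_zero, zero_mul]
      exact Real.sqrt_nonneg M
  · -- the product identity
    intro α β
    rw [tsum_eq_single β (by intro γ hγ; simp [hγ])]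
    simp only [if_pos rfl]
    rcases eq_or_lt_of_le (hT0 β) with h0 | h0
    · have hz : ‖a α β‖ = 0 :=
        le_antisymm ((hTa α β).trans h0.symm.le) (norm_nonneg _)
      have ha0 : a α β = 0 := norm_eq_zero.1 hz
      simp [ha0]
    · have hne : ((Real.sqrt (T β) : ℝ) : ℂ) ≠ 0 :=
        Complex.ofReal_ne_zero.2 (Real.sqrt_pos.2 h0).ne'
      exact div_mul_cancel₀ _ hne
end

section
/- Let (a_{α,β})_{α ∈ ℕ^{d₂}, β ∈ ℕ^{d₁}} be complex numbers such that for every t > 0, sup_{α,β} |a_{α,β}| (1+|α|)^t (1+|β|)^t < ∞ (rapid decay). Then there exist (b_{α,β}) and a diagonal family (c_{α,β}) (c_{α,β} = 0 for α ≠ β, c_{β,β} ≥ 0) such that both b and c have rapid decay in the same sense, and ∑_γ b_{α,γ} c_{γ,β} = a_{α,β} for all α, β. -/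
open Real

/-- Rapid decay of a doubly indexed family of Hermite coefficients. -/
def RapidDecay {d₂ d₁ : ℕ} (a : (Fin d₂ → ℕ) → (Fin d₁ → ℕ) → ℂ) : Prop :=
  ∀ t : ℝ, 0 < t → ∃ M : ℝ, ∀ (α : Fin d₂ → ℕ) (β : Fin d₁ → ℕ),
    ‖a α β‖ * (1 + mlen α) ^ t * (1 + mlen β) ^ t ≤ M

lemma rpow_eq_sqrt (x t : ℝ) (hx : 0 < x) : x ^ t = Real.sqrt (x ^ (2 * t)) := by
  rw [two_mul, Real.rpow_add hx, ← sq, Real.sqrt_sq (Real.rpow_nonneg hx.le t)]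

theorem stmt3 (d₁ d₂ : ℕ)
    (a : (Fin d₂ → ℕ) → (Fin d₁ → ℕ) → ℂ)
    (ha : RapidDecay a) :
    ∃ (b : (Fin d₂ → ℕ) → (Fin d₁ → ℕ) → ℂ) (c : (Fin d₁ → ℕ) → (Fin d₁ → ℕ) → ℂ),
      (∀ α β : Fin d₁ → ℕ, α ≠ β → c α β = 0) ∧
      (∀ β : Fin d₁ → ℕ, (c β β).im = 0 ∧ 0 ≤ (c β β).re) ∧
      RapidDecay b ∧ RapidDecay c ∧
      (∀ (α : Fin d₂ → ℕ) (β : Fin d₁ → ℕ),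
        (∑' γ : Fin d₁ → ℕ, b α γ * c γ β) = a α β) := by
  classical
  obtain ⟨M₀, hM₀⟩ := ha 1 one_pos
  have h1le : ∀ {d : ℕ} (α : Fin d → ℕ), (1:ℝ) ≤ 1 + mlen α :=
    fun α => le_add_of_nonneg_right (mlen_nonneg α)
  have h1pos : ∀ {d : ℕ} (α : Fin d → ℕ), (0:ℝ) < 1 + mlen α :=
    fun α => lt_of_lt_of_le one_pos (h1le α)
  set S : (Fin d₁ → ℕ) → ℝ := fun β => ⨆ α : Fin d₂ → ℕ, ‖a α β‖ with hSdef
  have hbdd : ∀ β, BddAbove (Set.range fun α : Fin d₂ → ℕ => ‖a α β‖) := by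
    intro β
    refine ⟨M₀, ?_⟩
    rintro x ⟨α, rfl⟩
    show ‖a α β‖ ≤ M₀
    have h := hM₀ α β
    rw [Real.rpow_one, Real.rpow_one] at h
    have e1 : ‖a α β‖ ≤ ‖a α β‖ * (1 + mlen α) :=
      le_mul_of_one_le_right (norm_nonneg _) (h1le α)
    have e2 : ‖a α β‖ * (1 + mlen α) ≤ ‖a α β‖ * (1 + mlen α) * (1 + mlen β) :=
      le_mul_of_one_le_right (le_trans (norm_nonneg _) e1) (h1le β)
    linarith
  have hle : ∀ α β, ‖a α β‖ ≤ S β := fun α β => le_ciSup (hbdd β) α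
  have hS_nonneg : ∀ β, 0 ≤ S β :=
    fun β => le_trans (norm_nonneg (a (fun _ => 0) β)) (hle _ β)
  refine ⟨fun α β => if S β = 0 then 0 else a α β / (Real.sqrt (S β) : ℂ),
    fun α β => if α = β then ((Real.sqrt (S β) : ℂ)) else 0, ?_, ?_, ?_, ?_, ?_⟩
  · intro α β hne; simp [hne]
  · intro β; simp [Real.sqrt_nonneg]
  · -- RapidDecay b
    intro t ht
    obtain ⟨M, hM⟩ := ha (2 * t) (by positivity)
    refine ⟨Real.sqrt (max M 0), fun α β => ?_⟩
    have hbnorm : ‖if S β = 0 then 0 else a α β / (Real.sqrt (S β) : ℂ)‖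
        ≤ Real.sqrt ‖a α β‖ := by
      by_cases h : S β = 0
      · simp [h, Real.sqrt_nonneg]
      · have hSpos : 0 < S β := lt_of_le_of_ne (hS_nonneg β) (Ne.symm h)
        have hsq : 0 < Real.sqrt (S β) := Real.sqrt_pos.mpr hSpos
        rw [if_neg h, norm_div, Complex.norm_real, Real.norm_eq_abs,
          abs_of_nonneg (Real.sqrt_nonneg _)]
        rw [div_le_iff₀ hsq]
        have h1 : Real.sqrt ‖a α β‖ ≤ Real.sqrt (S β) :=
          Real.sqrt_le_sqrt (hle α β)
        nlinarith [Real.sq_sqrt (norm_nonneg (a α β)), Real.sqrt_nonneg ‖a α β‖]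
    calc ‖if S β = 0 then 0 else a α β / (Real.sqrt (S β) : ℂ)‖ * (1 + mlen α) ^ t
          * (1 + mlen β) ^ t
        ≤ Real.sqrt ‖a α β‖ * (1 + mlen α) ^ t * (1 + mlen β) ^ t := by
          gcongr <;> exact Real.rpow_nonneg (h1pos _).le _
      _ = Real.sqrt (‖a α β‖ * (1 + mlen α) ^ (2*t) * (1 + mlen β) ^ (2*t)) := by
          rw [rpow_eq_sqrt _ t (h1pos α), rpow_eq_sqrt _ t (h1pos β),
            ← Real.sqrt_mul (norm_nonneg _), ← Real.sqrt_mul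
            (mul_nonneg (norm_nonneg _) (Real.rpow_nonneg (h1pos α).le _))]
      _ ≤ Real.sqrt (max M 0) :=
          Real.sqrt_le_sqrt (le_trans (hM α β) (le_max_left _ _))
  · -- RapidDecay c
    intro t ht
    obtain ⟨M, hM⟩ := ha (4 * t) (by positivity)
    refine ⟨Real.sqrt (max M 0), fun α β => ?_⟩
    beta_reduce
    by_cases h : α = β
    · subst h
      rw [if_pos rfl, Complex.norm_real, Real.norm_eq_abs,
        abs_of_nonneg (Real.sqrt_nonneg _)]
      have hSP : S α * (1 + mlen α) ^ (4*t) ≤ max M 0 := by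
        rw [← le_div_iff₀ (Real.rpow_pos_of_pos (h1pos α) _)]
        refine ciSup_le fun γ => ?_
        rw [le_div_iff₀ (Real.rpow_pos_of_pos (h1pos α) _)]
        have h1 : (1:ℝ) ≤ (1 + mlen γ) ^ (4*t) :=
          Real.one_le_rpow (h1le γ) (by positivity)
        have h2 := hM γ α
        have h3 : ‖a γ α‖ * (1 + mlen α) ^ (4*t)
            ≤ ‖a γ α‖ * (1 + mlen γ) ^ (4*t) * (1 + mlen α) ^ (4*t) := by
          have := mul_le_mul_of_nonneg_right
            (le_mul_of_one_le_right (norm_nonneg (a γ α)) h1)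
            (Real.rpow_nonneg (h1pos α).le (4*t))
          linarith
        exact le_trans h3 (le_trans h2 (le_max_left _ _))
      calc Real.sqrt (S α) * (1 + mlen α) ^ t * (1 + mlen α) ^ t
          = Real.sqrt (S α) * (1 + mlen α) ^ (2*t) := by
            rw [mul_assoc, ← Real.rpow_add (h1pos α)]; ring_nf
        _ = Real.sqrt (S α * (1 + mlen α) ^ (4*t)) := by
            rw [rpow_eq_sqrt _ (2*t) (h1pos α), ← Real.sqrt_mul (hS_nonneg α)]
            ring_nf
        _ ≤ Real.sqrt (max M 0) := Real.sqrt_le_sqrt hSP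
    · rw [if_neg h]
      simp only [norm_zero, zero_mul]
      exact Real.sqrt_nonneg _
  · -- tsum
    intro α β
    rw [tsum_eq_single β (fun γ hγ => by simp [hγ])]
    beta_reduce
    by_cases h : S β = 0
    · rw [if_pos h]
      have : ‖a α β‖ = 0 := le_antisymm (h ▸ hle α β) (norm_nonneg _)
      have ha0 : a α β = 0 := norm_eq_zero.mp this
      simp [ha0]
    · have hSpos : 0 < S β := lt_of_le_of_ne (hS_nonneg β) (Ne.symm h)
      rw [if_neg h, if_pos rfl, div_mul_cancel₀]
      exact_mod_cast (Real.sqrt_pos.mpr hSpos).ne'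
end
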